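/- Let K and V be Hermitian N×N complex matrices. Then there exists a constant C ≥ 0 such that for all t ∈ [0, 1], ‖ exp(−i(K+V)t) − exp(−iVt/2) · exp(−iKt) · exp(−iVt/2) ‖ ≤ C·t³, where ‖·‖ is the operator norm. That is, the symmetric (second-order) Trotter–Suzuki splitting e^{−iVt/2} e^{−iKt} e^{−iVt/2} approximates the time-evolution operator e^{−i(K+V)t} with error of order O(t³). -/

import Mathlib

open scoped Matrix.Norms.L2Operator

noncomputable section

namespace Stmt11Aux

open Set

variable {N : ℕ}

abbrev Mat (N : ℕ) := Matrix (Fin N) (Fin N) ℂ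

/-- Restrict a complex derivative to the reals (vector-valued version). -/
lemma hasDerivAt_ofReal_comp {E : Type*} [NormedAddCommGroup E] [NormedSpace ℂ E]
    {g : ℂ → E} {g' : E} {z : ℝ} (h : HasDerivAt g g' z) :
    HasDerivAt (fun t : ℝ => g t) g' z := by
  have h2 := (h.hasFDerivAt.restrictScalars ℝ).comp z Complex.ofRealCLM.hasFDerivAt
  have h3 := h2.hasDerivAt
  simpa [Function.comp_def] using h3

def E (M : Mat N) (t : ℝ) : Mat N := NormedSpace.exp ((t : ℂ) • M)

lemma E_zero (M : Mat N) : E M 0 = 1 := by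
  simp [E, NormedSpace.exp_zero]

lemma hasDerivAt_E (M : Mat N) (t : ℝ) : HasDerivAt (E M) (M * E M t) t := by
  have h := hasDerivAt_exp_smul_const' (𝕂 := ℂ) (𝔸 := Mat N) M (t : ℂ)
  exact hasDerivAt_ofReal_comp h

def T (W B : Mat N) (P Q R : Mat N) (t : ℝ) : Mat N :=
  (P * E W t) * (Q * E B t) * (R * E W t)

lemma T_zero (W B P Q R : Mat N) : T W B P Q R 0 = P * Q * R := by
  simp [T, E_zero]

lemma hasDerivAt_T (W B P Q R : Mat N) (t : ℝ) :
    HasDerivAt (T W B P Q R)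
      (T W B (P * W) Q R t + T W B P (Q * B) R t + T W B P Q (R * W) t) t := by
  have h1 : HasDerivAt (fun s => P * E W s) ((P * W) * E W t) t := by
    simpa [mul_assoc] using (hasDerivAt_E W t).const_mul P
  have h2 : HasDerivAt (fun s => Q * E B s) ((Q * B) * E B t) t := by
    simpa [mul_assoc] using (hasDerivAt_E B t).const_mul Q
  have h3 : HasDerivAt (fun s => R * E W s) ((R * W) * E W t) t := by
    simpa [mul_assoc] using (hasDerivAt_E W t).const_mul R
  have h := (h1.mul h2).mul h3
  refine h.congr_deriv ?_
  simp only [T, Pi.mul_apply]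
  noncomm_ring

def S (W B : Mat N) (l : List (Mat N × Mat N × Mat N)) (t : ℝ) : Mat N :=
  (l.map (fun p => T W B p.1 p.2.1 p.2.2 t)).sum

def step (W B : Mat N) (p : Mat N × Mat N × Mat N) : List (Mat N × Mat N × Mat N) :=
  [(p.1 * W, p.2.1, p.2.2), (p.1, p.2.1 * B, p.2.2), (p.1, p.2.1, p.2.2 * W)]

lemma hasDerivAt_S (W B : Mat N) (l : List (Mat N × Mat N × Mat N)) (t : ℝ) :
    HasDerivAt (S W B l) (S W B (l.flatMap (step W B)) t) t := by
  induction l with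
  | nil => exact (hasDerivAt_const t (0 : Mat N))
  | cons p l ih =>
    have h := ((hasDerivAt_T W B p.1 p.2.1 p.2.2 t).add ih)
    have e1 : S W B (p :: l) = fun x => T W B p.1 p.2.1 p.2.2 x + S W B l x := by
      funext x; simp [S]
    have e2 : S W B ((p :: l).flatMap (step W B)) t =
        T W B (p.1 * W) p.2.1 p.2.2 t + T W B p.1 (p.2.1 * B) p.2.2 t +
          T W B p.1 p.2.1 (p.2.2 * W) t + S W B (l.flatMap (step W B)) t := by
      simp [S, step, add_assoc]
    rw [e1, e2]
    exact h

def L (W B : Mat N) (k : ℕ) : List (Mat N × Mat N × Mat N) :=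
  (fun l => l.flatMap (step W B))^[k] [(1, 1, 1)]

def G (A : Mat N) (k : ℕ) (t : ℝ) : Mat N := A ^ k * E A t

lemma hasDerivAt_G (A : Mat N) (k : ℕ) (t : ℝ) :
    HasDerivAt (G A k) (G A (k + 1) t) t := by
  refine ((hasDerivAt_E A t).const_mul (A ^ k)).congr_deriv ?_
  simp [G, pow_succ, mul_assoc]

def F (A W B : Mat N) (k : ℕ) (t : ℝ) : Mat N := G A k t - S W B (L W B k) t

lemma hasDerivAt_F (A W B : Mat N) (k : ℕ) (t : ℝ) :
    HasDerivAt (F A W B k) (F A W B (k + 1) t) t := by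
  have h := (hasDerivAt_G A k t).sub (hasDerivAt_S W B (L W B k) t)
  refine h.congr_deriv ?_
  simp [F, L, Function.iterate_succ_apply']

lemma F_continuous (A W B : Mat N) (k : ℕ) : Continuous (F A W B k) :=
  continuous_iff_continuousAt.2 fun t => (hasDerivAt_F A W B k t).continuousAt

/-- The iterated ODE comparison step. -/
lemma bound_step {u u' : ℝ → Mat N} {c : ℝ} {n : ℕ}
    (hu : ∀ t, HasDerivAt u (u' t) t) (hu0 : u 0 = 0)
    (hb : ∀ x ∈ Icc (0 : ℝ) 1, ‖u' x‖ ≤ c * x ^ n) :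
    ∀ x ∈ Icc (0 : ℝ) 1, ‖u x‖ ≤ c / (n + 1) * x ^ (n + 1) := by
  intro x hx
  have hB : ∀ y : ℝ, HasDerivAt (fun y : ℝ => c / (n + 1) * y ^ (n + 1)) (c * y ^ n) y := by
    intro y
    have h := (hasDerivAt_pow (n + 1) y).const_mul (c / (n + 1))
    refine h.congr_deriv ?_
    push_cast
    field_simp
  have := image_norm_le_of_norm_deriv_right_le_deriv_boundary
    (f := u) (f' := u') (a := 0) (b := 1)
    (continuous_iff_continuousAt.2 fun t => (hu t).continuousAt).continuousOn
    (fun y _ => (hu y).hasDerivWithinAt)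
    (by simp [hu0]) hB
    (fun y hy => hb y ⟨hy.1, le_of_lt hy.2⟩)
  exact this hx

end Stmt11Aux

open Stmt11Aux Set in
/-- **Second-order (symmetric) Trotter–Suzuki error bound.** For Hermitian `N × N` complex
matrices `K` and `V`, there is a constant `C ≥ 0` such that for all `t ∈ [0,1]`,
`‖exp(−i(K+V)t) − exp(−iVt/2)·exp(−iKt)·exp(−iVt/2)‖ ≤ C·t³`, where `‖·‖` is the operator
norm induced by the Euclidean norm on `ℂᴺ`. -/
theorem stmt11 (N : ℕ) (K V : Matrix (Fin N) (Fin N) ℂ)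
    (hK : K.IsHermitian) (hV : V.IsHermitian) :
    ∃ C : ℝ, 0 ≤ C ∧ ∀ t ∈ Set.Icc (0 : ℝ) 1,
      ‖NormedSpace.exp ((-(Complex.I * (t : ℂ))) • (K + V)) -
        NormedSpace.exp ((-(Complex.I * (t : ℂ) / 2)) • V) *
          NormedSpace.exp ((-(Complex.I * (t : ℂ))) • K) *
          NormedSpace.exp ((-(Complex.I * (t : ℂ) / 2)) • V)‖ ≤ C * t ^ 3 := by
  set A : Mat N := (-Complex.I) • (K + V) with hA
  set B : Mat N := (-Complex.I) • K with hB
  set W : Mat N := (-(Complex.I / 2)) • V with hW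
  have hAWB : A = W + B + W := by
    rw [hA, hB, hW, smul_add]
    module
  -- value computations at 0
  have hF0 : F A W B 0 0 = 0 := by
    simp [F, G, S, L, E_zero, T_zero]
  have hF1 : F A W B 1 0 = 0 := by
    simp only [F, G, S, L, Function.iterate_one, List.flatMap, step, List.map, List.sum_cons,
      List.sum_nil, E_zero, T_zero, pow_one, List.flatMap_cons, List.flatten_cons, List.flatten_nil, List.flatMap_nil, List.append_nil,
      List.map_cons, List.map_nil, mul_one]
    rw [hAWB]
    noncomm_ring
  have hF2 : F A W B 2 0 = 0 := by
    simp only [F, G, S, L, step, E_zero, T_zero, Function.iterate_succ, Function.iterate_zero,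
      Function.comp_apply, id_eq, List.flatMap_cons, List.flatMap_nil, List.append_nil,
      List.map_cons, List.map_nil, List.map_append, List.sum_cons, List.sum_nil, List.sum_append,
      mul_one, one_mul]
    rw [hAWB]
    noncomm_ring
  -- bound on the third derivative
  obtain ⟨c, hc⟩ := (isCompact_Icc (a := (0:ℝ)) (b := 1)).exists_bound_of_continuousOn
    (F_continuous A W B 3).continuousOn
  have hc0 : 0 ≤ c := le_trans (norm_nonneg _) (hc 0 (by norm_num))
  -- three comparison steps
  have h2 : ∀ x ∈ Icc (0:ℝ) 1, ‖F A W B 2 x‖ ≤ c * x ^ 1 := by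
    intro x hx
    have := bound_step (u := F A W B 2) (u' := F A W B 3) (c := c) (n := 0)
      (hasDerivAt_F A W B 2) hF2 (fun x hx => by simpa using hc x hx) x hx
    · norm_num at this; simpa using this
  have h1 : ∀ x ∈ Icc (0:ℝ) 1, ‖F A W B 1 x‖ ≤ c / 2 * x ^ 2 := by
    intro x hx
    have := bound_step (u := F A W B 1) (u' := F A W B 2) (c := c) (n := 1)
      (hasDerivAt_F A W B 1) hF1 h2 x hx
    · norm_num at this; simpa using this
  have h0 : ∀ x ∈ Icc (0:ℝ) 1, ‖F A W B 0 x‖ ≤ c / 2 / 3 * x ^ 3 := by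
    intro x hx
    have := bound_step (u := F A W B 0) (u' := F A W B 1) (c := c / 2) (n := 2)
      (hasDerivAt_F A W B 0) hF0 h1 x hx
    · norm_num at this; simpa using this
  refine ⟨c / 6, by positivity, fun t ht => ?_⟩
  have key := h0 t ht
  have heq : F A W B 0 t =
      NormedSpace.exp ((-(Complex.I * (t : ℂ))) • (K + V)) -
        NormedSpace.exp ((-(Complex.I * (t : ℂ) / 2)) • V) *
          NormedSpace.exp ((-(Complex.I * (t : ℂ))) • K) *
          NormedSpace.exp ((-(Complex.I * (t : ℂ) / 2)) • V) := by
    have eA : E A t = NormedSpace.exp ((-(Complex.I * (t : ℂ))) • (K + V)) := by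
      rw [E, hA, smul_smul]; congr 2; ring
    have eB : E B t = NormedSpace.exp ((-(Complex.I * (t : ℂ))) • K) := by
      rw [E, hB, smul_smul]; congr 2; ring
    have eW : E W t = NormedSpace.exp ((-(Complex.I * (t : ℂ) / 2)) • V) := by
      rw [E, hW, smul_smul]; congr 2; ring
    simp only [F, G, S, L, Function.iterate_zero, id_eq, List.map_cons, List.map_nil,
      List.sum_cons, List.sum_nil, T, pow_zero, one_mul, add_zero, mul_one]
    rw [eA, eB, eW]
  rw [heq] at key
  calc _ ≤ c / 2 / 3 * t ^ 3 := key
    _ = c / 6 * t ^ 3 := by ring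

end
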